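/- arXiv:2206.01101 — 2 statements merged into one kernel-verified Lean document; each statement's English description precedes it below -/
import Mathlib

section
/- Let d = r·p and let A ∈ ℝ^{d×d} be invertible. Suppose for each group g ∈ {1,…,r} there is a set of indices α^{(g)} ⊆ {1,…,d} of size p such that: for every vector δ supported on block B_g = {(g−1)p+1,…,gp} from a spanning set of that block, A δ is supported on α^{(g)}. Then the sets α^{(1)},…,α^{(r)} are pairwise disjoint and A = Π B where Π is a permutation matrix and B is block-diagonal with invertible p×p blocks. -/
open Matrix

/-- The embedding of block `g`'s coordinates `{gp, …, gp+p-1}` into `Fin d`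
when `d = r·p`. -/
def blockEmb {d r p : ℕ} (hd : d = r * p) (g : Fin r) (q : Fin p) : Fin d :=
  ⟨g * p + q, by
    subst hd
    calc (g : ℕ) * p + q < g * p + p := by omega
      _ = (g + 1) * p := by ring
      _ ≤ r * p := Nat.mul_le_mul_right p g.2⟩

/-- If `A` is invertible and, for each block `g` of the contiguous partition,
there is a set `α g` of `p` indices such that `A` maps a spanning family of
perturbations supported on block `g` to vectors supported on `α g`, then the
`α g` are pairwise disjoint and `A = Π B` with `Π` a permutation matrix and `B`
block-diagonal with invertible `p×p` blocks. -/
theorem stmt_7 (d r p : ℕ) (hd : d = r * p)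
    (A : Matrix (Fin d) (Fin d) ℝ) (hA : IsUnit A)
    (α : Fin r → Finset (Fin d)) (hcard : ∀ g, (α g).card = p)
    (δ : Fin r → Fin p → (Fin d → ℝ))
    (hsupp : ∀ (g : Fin r) (i : Fin p) (j : Fin d),
      (j : ℕ) / p ≠ (g : ℕ) → δ g i j = 0)
    (hspan : ∀ g : Fin r,
      (Submodule.span ℝ (Set.range (δ g)) : Set (Fin d → ℝ)) =
        {v : Fin d → ℝ | ∀ j : Fin d, (j : ℕ) / p ≠ (g : ℕ) → v j = 0})
    (himg : ∀ (g : Fin r) (i : Fin p) (j : Fin d),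
      j ∉ α g → A.mulVec (δ g i) j = 0) :
    (∀ g g' : Fin r, g ≠ g' → Disjoint (α g) (α g')) ∧
    ∃ (σ : Equiv.Perm (Fin d)) (B : Matrix (Fin d) (Fin d) ℝ),
      (∀ i j : Fin d, (i : ℕ) / p ≠ (j : ℕ) / p → B i j = 0) ∧
      (∀ g : Fin r,
        IsUnit (Matrix.of fun q q' : Fin p =>
          B (blockEmb hd g q) (blockEmb hd g q'))) ∧
      A = σ.permMatrix ℝ * B := by
  rcases Nat.eq_zero_or_pos p with hp | hp
  · -- degenerate case `p = 0`, so `d = 0` and everything is trivial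
    have hd0 : d = 0 := by rw [hd, hp, mul_zero]
    have hde : IsEmpty (Fin d) := by rw [hd0]; infer_instance
    have hpe : IsEmpty (Fin p) := by rw [hp]; infer_instance
    constructor
    · intro g g' _
      have : α g = ∅ := Finset.eq_empty_of_isEmpty _
      simp [this]
    · refine ⟨1, A, fun i => (hde.false i).elim, fun g => ?_, ?_⟩
      · have : Subsingleton (Matrix (Fin p) (Fin p) ℝ) := by
          constructor; intro a b; ext q; exact (hpe.false q).elim
        have h1 : (Matrix.of fun q q' : Fin p =>
            A (blockEmb hd g q) (blockEmb hd g q')) = 1 := Subsingleton.elim _ _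
        rw [h1]; exact isUnit_one
      · have : Subsingleton (Matrix (Fin d) (Fin d) ℝ) := by
          constructor; intro a b; ext i; exact (hde.false i).elim
        exact Subsingleton.elim _ _
  -- main case `0 < p`
  -- `L1` : `A` maps any vector supported on block `g` to a vector supported on `α g`
  have L1 : ∀ (g : Fin r) (v : Fin d → ℝ),
      (∀ j : Fin d, (j : ℕ) / p ≠ (g : ℕ) → v j = 0) →
      ∀ j : Fin d, j ∉ α g → A.mulVec v j = 0 := by
    intro g v hv j hj
    have hv' : v ∈ Submodule.span ℝ (Set.range (δ g)) := by
      show v ∈ (Submodule.span ℝ (Set.range (δ g)) : Set (Fin d → ℝ))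
      rw [hspan g]; exact hv
    clear hv
    induction hv' using Submodule.span_induction with
    | mem x hx => obtain ⟨i, rfl⟩ := hx; exact himg g i j hj
    | zero => simp [mulVec_zero]
    | add x y hx hy ihx ihy => simp [mulVec_add, Pi.add_apply, ihx, ihy]
    | smul a x hx ihx => simp [mulVec_smul, Pi.smul_apply, ihx]
  have hdiv : ∀ j : Fin d, (j : ℕ) / p < r := by
    intro j
    have hlt : (j : ℕ) < r * p := lt_of_lt_of_eq j.2 hd
    exact Nat.div_lt_of_lt_mul (by rwa [mul_comm] at hlt)
  have hdivblk : ∀ (g : Fin r) (q : Fin p), ((blockEmb hd g q : Fin d) : ℕ) / p = g := by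
    intro g q
    show ((g : ℕ) * p + q) / p = g
    rw [mul_comm, Nat.mul_add_div hp, Nat.div_eq_of_lt q.2, add_zero]
  have hmodblk : ∀ (g : Fin r) (q : Fin p), ((blockEmb hd g q : Fin d) : ℕ) % p = q := by
    intro g q
    show ((g : ℕ) * p + q) % p = q
    rw [mul_comm, Nat.mul_add_mod, Nat.mod_eq_of_lt q.2]
  -- the `α g` cover `Fin d`
  have hcover : ∀ k : Fin d, ∃ g : Fin r, k ∈ α g := by
    intro k
    by_contra h
    push_neg at h
    obtain ⟨w, hw⟩ := (Matrix.mulVec_surjective_iff_isUnit.mpr hA) (Pi.single k (1 : ℝ))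
    have hdec : w = ∑ g : Fin r, (fun j : Fin d =>
        if (j : ℕ) / p = (g : ℕ) then w j else 0) := by
      funext j
      rw [Finset.sum_apply]
      have hiff : ∀ g : Fin r, ((j : ℕ) / p = (g : ℕ)) ↔ g = (⟨(j : ℕ) / p, hdiv j⟩ : Fin r) := by
        intro g; rw [Fin.ext_iff]; exact eq_comm
      simp only [hiff]
      rw [Finset.sum_ite_eq' Finset.univ (⟨(j : ℕ) / p, hdiv j⟩ : Fin r) (fun _ => w j)]
      simp
    have hz : A.mulVec w k = 0 := by
      conv_lhs => rw [hdec]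
      have hsum : A.mulVec (∑ g : Fin r, (fun j : Fin d =>
          if (j : ℕ) / p = (g : ℕ) then w j else 0)) =
          ∑ g : Fin r, A.mulVec (fun j : Fin d =>
            if (j : ℕ) / p = (g : ℕ) then w j else 0) := by
        rw [← A.mulVecLin_apply, map_sum]
        simp only [mulVecLin_apply]
      rw [hsum, Finset.sum_apply]
      refine Finset.sum_eq_zero fun g _ => ?_
      exact L1 g _ (fun j hj => if_neg hj) k (h g)
    rw [hw] at hz
    simp at hz
  -- pairwise disjointness
  have hdis : ∀ g g' : Fin r, g ≠ g' → Disjoint (α g) (α g') := by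
    intro g g' hgg'
    rw [Finset.disjoint_left]
    intro x hx hx'
    exfalso
    have hU : Finset.univ.biUnion α = Finset.univ := by
      apply Finset.eq_univ_iff_forall.mpr
      intro k
      obtain ⟨g₀, hg₀⟩ := hcover k
      exact Finset.mem_biUnion.mpr ⟨g₀, Finset.mem_univ _, hg₀⟩
    have hcardU : (Finset.univ.biUnion α).card = d := by
      rw [hU, Finset.card_univ, Fintype.card_fin]
    have h1 : Finset.univ.biUnion α ⊆
        (Finset.univ.erase g').biUnion α ∪ (α g' \ {x}) := by
      intro y hy
      obtain ⟨h₀, _, hy₀⟩ := Finset.mem_biUnion.mp hy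
      by_cases he : h₀ = g'
      · subst he
        by_cases hyx : y = x
        · subst hyx
          exact Finset.mem_union_left _
            (Finset.mem_biUnion.mpr ⟨g, Finset.mem_erase.mpr ⟨hgg', Finset.mem_univ _⟩, hx⟩)
        · exact Finset.mem_union_right _
            (Finset.mem_sdiff.mpr ⟨hy₀, by simp [hyx]⟩)
      · exact Finset.mem_union_left _
          (Finset.mem_biUnion.mpr ⟨h₀, Finset.mem_erase.mpr ⟨he, Finset.mem_univ _⟩, hy₀⟩)
    have h2 : ((Finset.univ.erase g').biUnion α).card ≤ (r - 1) * p := by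
      refine le_trans Finset.card_biUnion_le ?_
      have : ∑ h₀ ∈ Finset.univ.erase g', (α h₀).card
          = ∑ _h₀ ∈ Finset.univ.erase g', p :=
        Finset.sum_congr rfl fun h₀ _ => hcard h₀
      rw [this, Finset.sum_const, Finset.card_erase_of_mem (Finset.mem_univ _),
        Finset.card_univ, Fintype.card_fin, smul_eq_mul]
    have h3 : (α g' \ {x}).card = p - 1 := by
      rw [Finset.card_sdiff_of_subset (by simpa using hx'), hcard, Finset.card_singleton]
    have hle : d ≤ (r - 1) * p + (p - 1) := by
      calc d = (Finset.univ.biUnion α).card := hcardU.symm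
        _ ≤ ((Finset.univ.erase g').biUnion α ∪ (α g' \ {x})).card :=
            Finset.card_le_card h1
        _ ≤ ((Finset.univ.erase g').biUnion α).card + (α g' \ {x}).card :=
            Finset.card_union_le _ _
        _ ≤ (r - 1) * p + (p - 1) := by rw [h3]; exact Nat.add_le_add_right h2 _
    have hr : 0 < r := g'.pos
    obtain ⟨r', rfl⟩ : ∃ r', r = r' + 1 := ⟨r - 1, by omega⟩
    rw [Nat.add_sub_cancel] at hle
    have : d = r' * p + p := by rw [hd]; ring
    omega
  refine ⟨hdis, ?_⟩
  -- construct the permutation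
  have hA_inj : Function.Injective A.mulVec := Matrix.mulVec_injective_iff_isUnit.mpr hA
  set e1 : Fin r × Fin p → Fin d := fun gq => blockEmb hd gq.1 gq.2 with he1
  set e2 : Fin r × Fin p → Fin d :=
    fun gq => ((α gq.1).orderIsoOfFin (hcard gq.1) gq.2 : Fin d) with he2
  have he2mem : ∀ gq : Fin r × Fin p, e2 gq ∈ α gq.1 :=
    fun gq => ((α gq.1).orderIsoOfFin (hcard gq.1) gq.2).2
  have hinj1 : Function.Injective e1 := by
    rintro ⟨g, q⟩ ⟨g', q'⟩ h0
    have h : blockEmb hd g q = blockEmb hd g' q' := h0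
    have hg : (g : ℕ) = g' := by
      have h1 := hdivblk g q
      have h2 := hdivblk g' q'
      rw [h] at h1; rw [h1] at h2; exact h2
    have hq : (q : ℕ) = q' := by
      have h1 := hmodblk g q
      have h2 := hmodblk g' q'
      rw [h] at h1; rw [h1] at h2; exact h2
    exact Prod.ext (Fin.ext hg) (Fin.ext hq)
  have hinj2 : Function.Injective e2 := by
    rintro ⟨g, q⟩ ⟨g', q'⟩ h
    have hgg : g = g' := by
      by_contra hne
      exact (Finset.disjoint_left.mp (hdis g g' hne) (he2mem ⟨g, q⟩))
        (h ▸ he2mem ⟨g', q'⟩)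
    subst hgg
    have : ((α g).orderIsoOfFin (hcard g)) q = ((α g).orderIsoOfFin (hcard g)) q' :=
      Subtype.ext h
    exact Prod.ext rfl (((α g).orderIsoOfFin (hcard g)).injective this)
  have hcardeq : Fintype.card (Fin r × Fin p) = Fintype.card (Fin d) := by
    simp [Fintype.card_prod, hd]
  have hbij1 : Function.Bijective e1 :=
    (Fintype.bijective_iff_injective_and_card e1).mpr ⟨hinj1, hcardeq⟩
  have hbij2 : Function.Bijective e2 :=
    (Fintype.bijective_iff_injective_and_card e2).mpr ⟨hinj2, hcardeq⟩
  set E1 : (Fin r × Fin p) ≃ Fin d := Equiv.ofBijective e1 hbij1 with hE1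
  set E2 : (Fin r × Fin p) ≃ Fin d := Equiv.ofBijective e2 hbij2 with hE2
  set σ : Equiv.Perm (Fin d) := E2.symm.trans E1 with hσ
  have hσe2 : ∀ gq : Fin r × Fin p, σ (e2 gq) = e1 gq := by
    intro gq
    show E1 (E2.symm (E2 gq)) = E1 gq
    rw [Equiv.symm_apply_apply]
  -- σ maps α g into block g
  have hσα : ∀ (g : Fin r) (k : Fin d), k ∈ α g → ((σ k : Fin d) : ℕ) / p = (g : ℕ) := by
    intro g k hk
    obtain ⟨⟨g'', q⟩, rfl⟩ := hbij2.2 k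
    have hg : g'' = g := by
      by_contra hne
      exact (Finset.disjoint_left.mp (hdis g'' g hne) (he2mem ⟨g'', q⟩)) hk
    subst hg
    rw [hσe2 ⟨g'', q⟩]
    exact hdivblk g'' q
  set B : Matrix (Fin d) (Fin d) ℝ := A.submatrix σ.symm id with hB
  -- block-zero property
  have hBzero : ∀ i j : Fin d, (i : ℕ) / p ≠ (j : ℕ) / p → B i j = 0 := by
    intro i j hij
    set g : Fin r := ⟨(j : ℕ) / p, hdiv j⟩ with hg
    have hsup : ∀ j' : Fin d, (j' : ℕ) / p ≠ (g : ℕ) → (Pi.single j 1 : Fin d → ℝ) j' = 0 := by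
      intro j' hj'
      have : j' ≠ j := by
        intro he; subst he; exact hj' rfl
      exact Pi.single_eq_of_ne this 1
    have hnot : σ.symm i ∉ α g := by
      intro hmem
      have := hσα g (σ.symm i) hmem
      rw [Equiv.apply_symm_apply] at this
      exact hij (this.trans rfl)
    have := L1 g (Pi.single j (1 : ℝ)) hsup (σ.symm i) hnot
    rw [mulVec_single] at this
    simpa [hB] using this
  -- A = permMatrix σ * B
  have hPB : σ.permMatrix ℝ * B = A := by
    rw [Equiv.Perm.permMatrix, PEquiv.toMatrix_toPEquiv_mul]
    ext i j
    simp [hB, Matrix.submatrix_apply]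
  -- B is a unit
  have hP : IsUnit (σ.permMatrix ℝ) := by
    rw [Matrix.isUnit_iff_isUnit_det, Matrix.det_permutation]
    rcases Int.units_eq_one_or (Equiv.Perm.sign σ) with h | h <;> simp [h]
  have hBunit : IsUnit B := by
    have h1 : (↑hP.unit : Matrix (Fin d) (Fin d) ℝ) * B = A := by
      rw [hP.unit_spec]; exact hPB
    have hBeq : B = (↑hP.unit⁻¹ : Matrix (Fin d) (Fin d) ℝ) * A := by
      rw [← h1, ← mul_assoc, Units.inv_mul, one_mul]
    rw [hBeq]
    exact (Units.isUnit _).mul hA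
  have hB_inj : Function.Injective B.mulVec := Matrix.mulVec_injective_iff_isUnit.mpr hBunit
  refine ⟨σ, B, hBzero, ?_, hPB.symm⟩
  intro g
  set M : Matrix (Fin p) (Fin p) ℝ :=
    Matrix.of fun q q' : Fin p => B (blockEmb hd g q) (blockEmb hd g q') with hM
  rw [← Matrix.mulVec_injective_iff_isUnit]
  have key : ∀ x : Fin p → ℝ, M.mulVec x = 0 → x = 0 := by
    intro x hx
    set v : Fin d → ℝ := fun j =>
      if h : (j : ℕ) / p = (g : ℕ) then x ⟨(j : ℕ) % p, Nat.mod_lt _ hp⟩ else 0 with hv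
    have hvblk : ∀ (g' : Fin r) (q : Fin p),
        v (blockEmb hd g' q) = if g' = g then x q else 0 := by
      intro g' q
      by_cases hgg : g' = g
      · have hcond : ((blockEmb hd g' q : Fin d) : ℕ) / p = (g : ℕ) := by
          rw [hdivblk g' q, hgg]
        simp only [hv, dif_pos hcond, if_pos hgg]
        congr 1
        exact Fin.ext (hmodblk g' q)
      · have hcond : ¬ (((blockEmb hd g' q : Fin d) : ℕ) / p = (g : ℕ)) := by
          rw [hdivblk g' q]
          exact fun h => hgg (Fin.ext h)
        simp only [hv, dif_neg hcond, if_neg hgg]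
    have hBv : B.mulVec v = 0 := by
      funext i
      simp only [Pi.zero_apply]
      have hBvi : B.mulVec v i = ∑ j : Fin d, B i j * v j := rfl
      by_cases hi : (i : ℕ) / p = (g : ℕ)
      · -- i lies in block g
        set qi : Fin p := ⟨(i : ℕ) % p, Nat.mod_lt _ hp⟩ with hqi
        have hieq : blockEmb hd g qi = i := by
          apply Fin.ext
          show (g : ℕ) * p + (i : ℕ) % p = (i : ℕ)
          rw [← hi]
          conv_rhs => rw [← Nat.div_add_mod (i : ℕ) p]
          ring
        have hre : B.mulVec v i
            = ∑ gq : Fin r × Fin p, B i (blockEmb hd gq.1 gq.2) * v (blockEmb hd gq.1 gq.2) := by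
          rw [hBvi]
          exact (Fintype.sum_equiv E1 (fun gq => B i (E1 gq) * v (E1 gq))
            (fun j => B i j * v j) (fun gq => rfl)).symm
        rw [hre, Fintype.sum_prod_type]
        rw [Finset.sum_eq_single g]
        · have hMx : M.mulVec x qi = ∑ q' : Fin p, M qi q' * x q' := rfl
          have hsum : ∑ q' : Fin p, B i (blockEmb hd g q') * v (blockEmb hd g q')
              = M.mulVec x qi := by
            rw [hMx]
            refine Finset.sum_congr rfl fun q' _ => ?_
            rw [hvblk g q', if_pos rfl]
            congr 1
            show B i (blockEmb hd g q') = B (blockEmb hd g qi) (blockEmb hd g q')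
            rw [hieq]
          rw [hsum, hx, Pi.zero_apply]
        · intro g' _ hg'
          refine Finset.sum_eq_zero fun q' _ => ?_
          rw [hvblk g' q', if_neg hg', mul_zero]
        · intro habs
          exact absurd (Finset.mem_univ g) habs
      · -- i lies outside block g
        rw [hBvi]
        refine Finset.sum_eq_zero fun j _ => ?_
        by_cases hj : (j : ℕ) / p = (g : ℕ)
        · rw [hBzero i j (by rw [hj]; exact hi), zero_mul]
        · simp only [hv, dif_neg hj, mul_zero]
    have hv0 : v = 0 :=
      hB_inj (show B.mulVec v = B.mulVec 0 by rw [hBv, mulVec_zero])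
    funext q
    have hq := congrFun hv0 (blockEmb hd g q)
    rw [hvblk g q, if_pos rfl] at hq
    simpa using hq
  intro x y hxy
  have h0 : M.mulVec (x - y) = 0 := by
    rw [Matrix.mulVec_sub, hxy, sub_self]
  exact sub_eq_zero.mp (key _ h0)
end

section
/- If a : ℝ^d → ℝ^d is analytic and satisfies a(z + δ_k) = a(z) + δ'_k for all z ∈ ℝ^d for a family δ_1,…,δ_m spanning ℝ^d (with the mean-value measure condition of Assumption 3 holding), then a is affine: there exist A ∈ ℝ^{d×d} and c ∈ ℝ^d with a(z) = A z + c for all z, and A is invertible whenever the δ'_k also span ℝ^d. -/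
open MeasureTheory Matrix

lemma oned_zero {h : ℝ → ℝ} (hh : AnalyticOnNhd ℝ h Set.univ)
    (hpos : volume {x | h x = 0} ≠ 0) : ∀ x, h x = 0 := by
  have hc : Continuous h := continuousOn_univ.1 hh.continuousOn
  have hcl : IsClosed {x | h x = 0} := isClosed_eq hc continuous_const
  have hunc : ¬ {x | h x = 0}.Countable := fun hct => hpos (hct.measure_zero _)
  obtain ⟨D, hD, ⟨x₀, hx₀⟩, hDsub⟩ :=
    exists_perfect_nonempty_of_isClosed_of_not_countable hcl hunc
  have hacc : AccPt x₀ (Filter.principal D) := hD.acc _ hx₀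
  have hfreq : ¬ (∀ᶠ z in nhdsWithin x₀ {x₀}ᶜ, h z ≠ 0) := by
    intro hev
    rw [accPt_iff_frequently] at hacc
    rw [eventually_nhdsWithin_iff] at hev
    obtain ⟨z, ⟨hz1, hz2⟩, hz3⟩ := (hacc.and_eventually hev).exists
    exact hz3 hz1 (hDsub hz2)
  have := (hh x₀ trivial).eventually_eq_zero_or_eventually_ne_zero.resolve_right hfreq
  have heq := hh.eqOn_zero_of_preconnected_of_eventuallyEq_zero isPreconnected_univ
    (Set.mem_univ x₀) this
  exact fun x => heq (Set.mem_univ x)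

/-- the linear map `y ↦ Fin.cons 0 y` -/
noncomputable def consL (n : ℕ) : (Fin n → ℝ) →L[ℝ] (Fin (n+1) → ℝ) :=
  LinearMap.toContinuousLinearMap
  { toFun := fun y => Fin.cons 0 y
    map_add' := fun y z => by
      funext i; refine Fin.cases ?_ (fun j => ?_) i <;> simp
    map_smul' := fun c y => by
      funext i; refine Fin.cases ?_ (fun j => ?_) i <;> simp }

lemma cons_eq_affine {n : ℕ} (x : ℝ) (y : Fin n → ℝ) :
    (Fin.cons x y : Fin (n+1) → ℝ) = (Fin.cons x 0 : Fin (n+1) → ℝ) + consL n y := by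
  funext i; refine Fin.cases ?_ (fun j => ?_) i <;>
    simp [consL, LinearMap.coe_toContinuousLinearMap']

lemma cons_eq_affine' {n : ℕ} (x : ℝ) (y : Fin n → ℝ) :
    (Fin.cons x y : Fin (n+1) → ℝ)
      = x • (Pi.single (0 : Fin (n+1)) (1:ℝ) : Fin (n+1) → ℝ) + (Fin.cons 0 y : Fin (n+1) → ℝ) := by
  funext i
  refine Fin.cases ?_ (fun j => ?_) i
  · simp
  · simp [Pi.single_apply, Fin.succ_ne_zero]

lemma slice_y_analytic {n : ℕ} {g : (Fin (n+1) → ℝ) → ℝ} (hg : AnalyticOnNhd ℝ g Set.univ)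
    (x : ℝ) : AnalyticOnNhd ℝ (fun y : Fin n → ℝ => g (Fin.cons x y)) Set.univ := by
  have hinner : AnalyticOnNhd ℝ (fun y : Fin n → ℝ => (Fin.cons x y : Fin (n+1) → ℝ))
      Set.univ := by
    have : (fun y : Fin n → ℝ => (Fin.cons x y : Fin (n+1) → ℝ))
        = fun y => (Fin.cons x 0 : Fin (n+1) → ℝ) + consL n y := by
      funext y; exact cons_eq_affine x y
    rw [this]
    exact (analyticOnNhd_const).add ((consL n).analyticOnNhd _)
  exact hg.comp hinner (Set.mapsTo_univ _ _)

lemma slice_x_analytic {n : ℕ} {g : (Fin (n+1) → ℝ) → ℝ} (hg : AnalyticOnNhd ℝ g Set.univ)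
    (y : Fin n → ℝ) : AnalyticOnNhd ℝ (fun x : ℝ => g (Fin.cons x y)) Set.univ := by
  have hinner : AnalyticOnNhd ℝ (fun x : ℝ => (Fin.cons x y : Fin (n+1) → ℝ)) Set.univ := by
    have : (fun x : ℝ => (Fin.cons x y : Fin (n+1) → ℝ))
        = fun x : ℝ => ((ContinuousLinearMap.id ℝ ℝ).smulRight
            (Pi.single (0 : Fin (n+1)) (1:ℝ))) x + (Fin.cons 0 y : Fin (n+1) → ℝ) := by
      funext x; simpa using cons_eq_affine' x y
    rw [this]
    exact (((ContinuousLinearMap.id ℝ ℝ).smulRight _).analyticOnNhd _).add analyticOnNhd_const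
  exact hg.comp hinner (Set.mapsTo_univ _ _)

lemma analytic_zero_of_measure_ne_zero :
    ∀ (n : ℕ) (g : (Fin n → ℝ) → ℝ), AnalyticOnNhd ℝ g Set.univ →
      volume {x | g x = 0} ≠ 0 → ∀ x, g x = 0 := by
  intro n
  induction n with
  | zero =>
    intro g hg hpos x
    have hne : {x : Fin 0 → ℝ | g x = 0}.Nonempty := by
      by_contra hne
      rw [Set.not_nonempty_iff_eq_empty] at hne
      rw [hne] at hpos
      exact hpos measure_empty
    obtain ⟨y, hy⟩ := hne
    rwa [Subsingleton.elim x y]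
  | succ n ih =>
    intro g hg hpos
    set Z' : Set (ℝ × (Fin n → ℝ)) := {p | g (Fin.cons p.1 p.2) = 0} with hZ'def
    have hconsCont : Continuous
        (fun p : ℝ × (Fin n → ℝ) => (Fin.cons p.1 p.2 : Fin (n+1) → ℝ)) := by
      apply continuous_pi; intro i
      refine Fin.cases ?_ (fun j => ?_) i
      · exact continuous_fst
      · simpa [Function.comp_def] using (continuous_apply j).comp continuous_snd
    have hgc : Continuous g := continuousOn_univ.1 hg.continuousOn
    have hZ'meas : MeasurableSet Z' :=
      (isClosed_eq (hgc.comp hconsCont) continuous_const).measurableSet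
    have hpre : (MeasurableEquiv.piFinSuccAbove (fun _ : Fin (n+1) => ℝ) 0) ⁻¹' Z'
        = {x | g x = 0} := by
      ext f
      have he : (MeasurableEquiv.piFinSuccAbove (fun _ : Fin (n+1) => ℝ) 0) f
          = (f 0, Fin.tail f) := by
        simp [MeasurableEquiv.piFinSuccAbove]
      simp only [Set.mem_preimage, hZ'def, Set.mem_setOf_eq, he, Fin.cons_self_tail]
    have hZ'vol : volume Z' ≠ 0 := by
      rw [← (volume_preserving_piFinSuccAbove (fun _ : Fin (n+1) => ℝ) 0).measure_preimage
        hZ'meas.nullMeasurableSet, hpre]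
      exact hpos
    have hS : volume {x : ℝ | volume (Prod.mk x ⁻¹' Z') ≠ 0} ≠ 0 := by
      intro h0
      apply hZ'vol
      rw [Measure.volume_eq_prod, Measure.measure_prod_null hZ'meas]
      rw [Filter.EventuallyEq, ae_iff]
      simpa using h0
    have hsub : ∀ y : Fin n → ℝ,
        {x : ℝ | volume (Prod.mk x ⁻¹' Z') ≠ 0} ⊆ {x : ℝ | g (Fin.cons x y) = 0} := by
      intro y x hx
      exact ih (fun y => g (Fin.cons x y)) (slice_y_analytic hg x) hx y
    have key : ∀ (x : ℝ) (y : Fin n → ℝ), g (Fin.cons x y) = 0 := by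
      intro x y
      refine oned_zero (slice_x_analytic hg y) ?_ x
      intro h0
      exact hS (measure_mono_null (hsub y) h0)
    intro f
    have := key (f 0) (Fin.tail f)
    rwa [Fin.cons_self_tail] at this

lemma clm_zero_of_span {d m : ℕ} {δ : Fin m → (Fin d → ℝ)}
    (hspan : Submodule.span ℝ (Set.range δ) = ⊤)
    (L : (Fin d → ℝ) →L[ℝ] ℝ) (h : ∀ k, L (δ k) = 0) : L = 0 := by
  have : ∀ v : Fin d → ℝ, L v = 0 := by
    intro v
    have hv : v ∈ Submodule.span ℝ (Set.range δ) := hspan ▸ Submodule.mem_top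
    induction hv using Submodule.span_induction with
    | mem x hx => obtain ⟨k, rfl⟩ := hx; exact h k
    | zero => exact map_zero L
    | add x y _ _ hx hy => rw [map_add, hx, hy, add_zero]
    | smul c x _ hx => rw [_root_.map_smul, hx, smul_zero]
  ext v
  simp [this]

lemma clm_ext_single {d : ℕ} (L M : (Fin d → ℝ) →L[ℝ] ℝ)
    (h : ∀ j, L (Pi.single j 1) = M (Pi.single j 1)) : L = M := by
  ext v
  have hv : v = ∑ j, v j • (Pi.single j (1:ℝ) : Fin d → ℝ) := by
    funext i
    simp [Finset.sum_apply, Pi.single_apply]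
  conv_lhs => rw [hv]
  conv_rhs => rw [hv]
  rw [map_sum, map_sum]
  refine Finset.sum_congr rfl (fun j _ => ?_)
  rw [L.map_smul, M.map_smul, h j]

/-- If `a : ℝ^d → ℝ^d` is analytic and satisfies `a(z + δₖ) = a(z) + δ'ₖ` for
all `z`, for a family `δ₁,…,δₘ` spanning `ℝ^d`, with the mean-value
positive-measure condition (Assumption 3) holding for each perturbation, then
`a` is affine, `a(z) = Az + c`, and `A` is invertible whenever the `δ'ₖ` also
span `ℝ^d`. -/
theorem stmt_15 (d m : ℕ) (a : (Fin d → ℝ) → (Fin d → ℝ))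
    (hanal : AnalyticOnNhd ℝ a Set.univ)
    (δ δ' : Fin m → (Fin d → ℝ))
    (hshift : ∀ (z : Fin d → ℝ) (k : Fin m), a (z + δ k) = a z + δ' k)
    (hspan : Submodule.span ℝ (Set.range δ) = ⊤)
    (hmeas : ∀ (k : Fin m) (i j : Fin d),
      0 < volume {θ : Fin d → ℝ | ∃ z : Fin d → ℝ,
        fderiv ℝ (fun u => a u i) (z + δ k) (Pi.single j 1) =
          fderiv ℝ (fun u => a u i) z (Pi.single j 1) +
            fderiv ℝ (fun w => fderiv ℝ (fun u => a u i) w (Pi.single j 1)) θ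
              (δ k)}) :
    ∃ (A : Matrix (Fin d) (Fin d) ℝ) (c : Fin d → ℝ),
      (∀ z : Fin d → ℝ, a z = A.mulVec z + c) ∧
      (Submodule.span ℝ (Set.range δ') = ⊤ → IsUnit A) := by
  classical
  -- components are analytic
  have haij : ∀ i : Fin d, AnalyticOnNhd ℝ (fun u => a u i) Set.univ := fun i =>
    (ContinuousLinearMap.proj (R := ℝ) (φ := fun _ : Fin d => ℝ) i).comp_analyticOnNhd hanal
  have hdiff : ∀ i : Fin d, Differentiable ℝ (fun u => a u i) := fun i x =>
    ((haij i) x trivial).differentiableAt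
  have hf : ∀ i j : Fin d, AnalyticOnNhd ℝ
      (fun w => fderiv ℝ (fun u => a u i) w (Pi.single j 1)) Set.univ := fun i j =>
    by
      have h := (ContinuousLinearMap.apply ℝ ℝ ((Pi.single j (1:ℝ)) : Fin d → ℝ)).comp_analyticOnNhd (haij i).fderiv
      exact h
  have hdiff_f : ∀ i j : Fin d, Differentiable ℝ
      (fun w => fderiv ℝ (fun u => a u i) w (Pi.single j 1)) := fun i j x =>
    ((hf i j) x trivial).differentiableAt
  -- periodicity of the derivative
  have hper : ∀ (i : Fin d) (k : Fin m) (z : Fin d → ℝ),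
      fderiv ℝ (fun u => a u i) (z + δ k) = fderiv ℝ (fun u => a u i) z := by
    intro i k z
    have hinner : HasFDerivAt (fun x : Fin d → ℝ => x + δ k)
        (ContinuousLinearMap.id ℝ (Fin d → ℝ)) z := (hasFDerivAt_id z).add_const _
    have houter : HasFDerivAt (fun u => a u i)
        (fderiv ℝ (fun u => a u i) (z + δ k)) (z + δ k) :=
      (hdiff i (z + δ k)).hasFDerivAt
    have hcomp := (houter.comp z hinner).fderiv
    rw [ContinuousLinearMap.comp_id] at hcomp
    have heq : ((fun u => a u i) ∘ fun x : Fin d → ℝ => x + δ k)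
        = fun x => a x i + δ' k i := by
      funext x
      simp only [Function.comp_apply]
      rw [hshift x k]
      rfl
    rw [heq, fderiv_add_const] at hcomp
    exact hcomp.symm
  -- the second-derivative directional functions vanish
  have hg0 : ∀ (k : Fin m) (i j : Fin d) (θ : Fin d → ℝ),
      fderiv ℝ (fun w => fderiv ℝ (fun u => a u i) w (Pi.single j 1)) θ (δ k) = 0 := by
    intro k i j
    have hganal : AnalyticOnNhd ℝ (fun θ => fderiv ℝ
        (fun w => fderiv ℝ (fun u => a u i) w (Pi.single j 1)) θ (δ k)) Set.univ :=
      (ContinuousLinearMap.apply ℝ ℝ (δ k)).comp_analyticOnNhd (hf i j).fderiv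
    apply analytic_zero_of_measure_ne_zero d _ hganal
    have hsub : {θ : Fin d → ℝ | ∃ z : Fin d → ℝ,
        fderiv ℝ (fun u => a u i) (z + δ k) (Pi.single j 1) =
          fderiv ℝ (fun u => a u i) z (Pi.single j 1) +
            fderiv ℝ (fun w => fderiv ℝ (fun u => a u i) w (Pi.single j 1)) θ (δ k)}
        ⊆ {θ : Fin d → ℝ | fderiv ℝ
            (fun w => fderiv ℝ (fun u => a u i) w (Pi.single j 1)) θ (δ k) = 0} := by
      rintro θ ⟨z, hz⟩
      rw [hper i k z] at hz
      exact (left_eq_add.mp hz)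
    intro h0
    exact absurd (measure_mono_null hsub h0) (hmeas k i j).ne'
  -- hence fderiv of f is zero, f constant
  have hconst_f : ∀ (i j : Fin d) (θ : Fin d → ℝ),
      fderiv ℝ (fun u => a u i) θ (Pi.single j 1)
        = fderiv ℝ (fun u => a u i) 0 (Pi.single j 1) := by
    intro i j θ
    have hfd0 : ∀ θ : Fin d → ℝ,
        fderiv ℝ (fun w => fderiv ℝ (fun u => a u i) w (Pi.single j 1)) θ = 0 := fun θ =>
      clm_zero_of_span hspan _ (fun k => hg0 k i j θ)
    exact is_const_of_fderiv_eq_zero (hdiff_f i j) hfd0 θ 0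
  have hfdc : ∀ (i : Fin d) (θ : Fin d → ℝ),
      fderiv ℝ (fun u => a u i) θ = fderiv ℝ (fun u => a u i) 0 := fun i θ =>
    clm_ext_single _ _ (fun j => hconst_f i j θ)
  -- a is affine
  have haff : ∀ (z : Fin d → ℝ) (i : Fin d),
      a z i = fderiv ℝ (fun u => a u i) 0 z + a 0 i := by
    intro z i
    set L := fderiv ℝ (fun u => a u i) 0 with hL
    have hdh : Differentiable ℝ (fun z => a z i - L z) :=
      (hdiff i).sub L.differentiable
    have hdz : ∀ z, fderiv ℝ (fun z => a z i - L z) z = 0 := by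
      intro z
      rw [fderiv_fun_sub (hdiff i z) L.differentiableAt, L.fderiv, hfdc i z, ← hL, sub_self]
    have := is_const_of_fderiv_eq_zero hdh hdz z 0
    simp only [map_zero, sub_zero] at this
    linarith [this]
  refine ⟨fun i j => fderiv ℝ (fun u => a u i) 0 (Pi.single j 1), a 0, ?_, ?_⟩
  · intro z
    funext i
    have hmv : (Matrix.mulVec (fun i j => fderiv ℝ (fun u => a u i) 0 (Pi.single j 1)) z) i
        = fderiv ℝ (fun u => a u i) 0 z := by
      have hv : z = ∑ j, z j • (Pi.single j (1:ℝ) : Fin d → ℝ) := by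
        funext t; simp [Finset.sum_apply, Pi.single_apply]
      conv_rhs => rw [hv]
      rw [map_sum]
      simp [Matrix.mulVec, dotProduct, mul_comm]
    rw [Pi.add_apply, hmv]
    exact haff z i
  · intro hspan'
    set A : Matrix (Fin d) (Fin d) ℝ := fun i j => fderiv ℝ (fun u => a u i) 0 (Pi.single j 1)
      with hA
    have hmv : ∀ k, A.mulVec (δ k) = δ' k := by
      intro k
      have h1 := hshift 0 k
      rw [zero_add] at h1
      have h2 : ∀ w, a w = A.mulVec w + a 0 := by
        intro w; funext i
        have hmv' : (A.mulVec w) i = fderiv ℝ (fun u => a u i) 0 w := by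
          have hv : w = ∑ j, w j • (Pi.single j (1:ℝ) : Fin d → ℝ) := by
            funext t; simp [Finset.sum_apply, Pi.single_apply]
          conv_rhs => rw [hv]
          rw [map_sum]
          simp [hA, Matrix.mulVec, dotProduct, mul_comm]
        rw [Pi.add_apply, hmv']
        exact haff w i
      have h3 := h2 (δ k)
      rw [h1, h2 0] at h3
      simp only [Matrix.mulVec_zero, zero_add] at h3
      -- h3 : a 0 + δ' k = A.mulVec (δ k) + a 0
      have := h3.symm
      rw [add_comm (a 0) (δ' k)] at this
      exact add_right_cancel this
    -- surjectivity of mulVec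
    have hsurj : Function.Surjective (Matrix.mulVecLin A) := by
      rw [← LinearMap.range_eq_top]
      rw [← top_le_iff, ← hspan', Submodule.span_le]
      rintro w ⟨k, rfl⟩
      exact ⟨δ k, by simpa using hmv k⟩
    have hbij : Function.Bijective (Matrix.mulVecLin A) :=
      ⟨(LinearMap.injective_iff_surjective).mpr hsurj, hsurj⟩
    have hunit : IsUnit (Matrix.toLinAlgEquiv' A) := by
      rw [Module.End.isUnit_iff]
      exact hbij
    have := hunit.map (Matrix.toLinAlgEquiv' (R := ℝ) (n := Fin d)).symm
    simpa using this
end
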